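/- arXiv:2403.17170 — 3 statements merged into one kernel-verified Lean document; each statement's English description precedes it below -/
import Mathlib

section
/- The function g(w) = -log|(1 - √(1+w²))/w| is harmonic and positive on Ω \ {0}, where Ω = ℂ \ {it : |t| ≥ 1}, and g(w) → 0 as w approaches any boundary point iζ with |ζ| > 1. -/
/-!
Write `s = √(1 + w²)`; the principal branch has `Re s ≥ 0`, and `Re s > 0` exactly on `Ω`.
Since `w² = (s - 1)(s + 1)`, `g = ½ (log |s + 1| - log |s - 1|)`, and
`|s ± 1|² = |s|² ± 2 Re s + 1`. Hence `g > 0` on `Ω \ {0}`; near such a point `g` is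
`-Re log` of the nonvanishing holomorphic `(1 - s)/w` after a rotation.
Although `s` jumps across the cut, `|s|² = |z|` and `Re s = √((|z| + Re z)/2)` are continuous
in `z = 1 + w²`; at `w = iζ`, `|ζ| > 1`, `z` is a negative real, so `Re s = 0`,
`|s + 1| = |s - 1|` and `g` tends to `0`.
-/

open Complex Set Filter Topology

namespace Complex

lemma re_sqrt_nonneg (z : ℂ) : 0 ≤ (sqrt z).re := by
  rw [sqrt, cpow_inv_two_re]
  exact Real.sqrt_nonneg _

lemma re_sqrt_pos {z : ℂ} (hz : z ∈ slitPlane) : 0 < (sqrt z).re := by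
  rw [sqrt, cpow_inv_two_re, Real.sqrt_pos]
  rcases mem_slitPlane_iff.mp hz with hre | him
  · linarith [norm_nonneg z]
  · linarith [neg_abs_le z.re, abs_re_lt_norm.mpr him]

lemma continuous_re_sqrt : Continuous fun z : ℂ => (sqrt z).re := by
  simp only [sqrt, cpow_inv_two_re]
  fun_prop

lemma sqrt_sq (z : ℂ) : sqrt z ^ 2 = z := cpow_ofNat_inv_pow z 2

lemma norm_sqrt_sq (z : ℂ) : ‖sqrt z‖ ^ 2 = ‖z‖ := by
  rw [← norm_pow, sqrt_sq]

lemma sqrt_add_one_ne_zero (z : ℂ) : sqrt z + 1 ≠ 0 := by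
  intro h
  have := congrArg re h
  simp only [add_re, one_re, zero_re] at this
  linarith [re_sqrt_nonneg z]

lemma norm_add_one_sq (s : ℂ) : ‖s + 1‖ ^ 2 = ‖s‖ ^ 2 + 2 * s.re + 1 := by
  simp only [Complex.sq_norm, normSq_apply, add_re, add_im, one_re, one_im]
  ring

lemma norm_sub_one_sq (s : ℂ) : ‖s - 1‖ ^ 2 = ‖s‖ ^ 2 - 2 * s.re + 1 := by
  simp only [Complex.sq_norm, normSq_apply, sub_re, sub_im, one_re, one_im]
  ring

lemma norm_sub_one_lt_norm_add_one {s : ℂ} (hs : 0 < s.re) : ‖s - 1‖ < ‖s + 1‖ :=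
  lt_of_pow_lt_pow_left₀ 2 (norm_nonneg _) (by rw [norm_sub_one_sq, norm_add_one_sq]; linarith)

lemma norm_sub_one_eq_norm_add_one {s : ℂ} (hs : s.re = 0) : ‖s - 1‖ = ‖s + 1‖ :=
  (pow_left_inj₀ (norm_nonneg _) (norm_nonneg _) two_ne_zero).mp
    (by rw [norm_sub_one_sq, norm_add_one_sq, hs]; ring)

lemma continuous_norm_sqrt_add_one : Continuous fun z : ℂ => ‖sqrt z + 1‖ := by
  have h (z : ℂ) : ‖sqrt z + 1‖ = √(‖z‖ + 2 * (sqrt z).re + 1) := by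
    rw [← norm_sqrt_sq z, ← norm_add_one_sq, Real.sqrt_sq (norm_nonneg _)]
  simp only [h]
  have := continuous_re_sqrt
  fun_prop

lemma continuous_norm_sqrt_sub_one : Continuous fun z : ℂ => ‖sqrt z - 1‖ := by
  have h (z : ℂ) : ‖sqrt z - 1‖ = √(‖z‖ - 2 * (sqrt z).re + 1) := by
    rw [← norm_sqrt_sq z, ← norm_sub_one_sq, Real.sqrt_sq (norm_nonneg _)]
  simp only [h]
  have := continuous_re_sqrt
  fun_prop

lemma exists_nhds_log_norm_eq_re {f : ℂ → ℂ} {w : ℂ}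
    (hf : ∀ᶠ z in 𝓝 w, DifferentiableAt ℂ f z) (hw : f w ≠ 0) :
    ∃ U ∈ 𝓝 w, ∃ F : ℂ → ℂ, DifferentiableOn ℂ F U ∧
      ∀ z ∈ U, Real.log ‖f z‖ = (F z).re := by
  -- the rotation `c` moves `f w` onto the positive real axis, away from the branch cut of `log`
  set c : ℂ := ‖f w‖ / f w
  have hc : ‖c‖ = 1 := by simp [c, hw]
  have hcw : c * f w ∈ slitPlane := by
    rw [show c * f w = (‖f w‖ : ℂ) from div_mul_cancel₀ _ hw]
    exact ofReal_mem_slitPlane.mpr (norm_pos_iff.mpr hw)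
  have hslit : ∀ᶠ z in 𝓝 w, c * f z ∈ slitPlane :=
    (hf.self_of_nhds.continuousAt.const_mul c).eventually_mem (isOpen_slitPlane.mem_nhds hcw)
  refine ⟨_, hf.and hslit, fun z => log (c * f z), fun z hz => ?_, fun z _ => ?_⟩
  · exact ((hz.1.const_mul c).clog hz.2).differentiableWithinAt
  · rw [log_re, norm_mul, hc, one_mul]

end Complex

lemma one_add_sq_mem_slitPlane {w : ℂ} (hw : ∀ t : ℝ, 1 ≤ |t| → w ≠ t * I) :
    1 + w ^ 2 ∈ slitPlane := by
  rw [mem_slitPlane_iff]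
  by_contra! h
  obtain ⟨hre, him⟩ := h
  simp only [sq, add_re, add_im, one_re, one_im, mul_re, mul_im] at hre him
  have hx : w.re = 0 := by
    by_contra hx
    have hy : w.im = 0 := by
      have : w.re * w.im = 0 := by linarith
      exact (mul_eq_zero.mp this).resolve_left hx
    nlinarith [sq_nonneg w.re]
  refine hw w.im (one_le_sq_iff_one_le_abs _ |>.mp (by nlinarith)) ?_
  exact Complex.ext (by simp [hx]) (by simp)

lemma sub_one_ne_zero_of_sq_eq_one_add_sq {s w : ℂ} (hs : s ^ 2 = 1 + w ^ 2) (hw : w ≠ 0) :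
    s - 1 ≠ 0 := by
  intro h
  rw [sub_eq_zero.mp h] at hs
  exact hw (pow_eq_zero_iff two_ne_zero |>.mp (by linear_combination -hs))

lemma neg_log_norm_one_sub_div {s w : ℂ} (hs : s ^ 2 = 1 + w ^ 2) (hw : w ≠ 0)
    (hs' : s + 1 ≠ 0) :
    -Real.log ‖(1 - s) / w‖ = (Real.log ‖s + 1‖ - Real.log ‖s - 1‖) / 2 := by
  have hs1 := sub_one_ne_zero_of_sq_eq_one_add_sq hs hw
  have hw2 : ‖w‖ ^ 2 = ‖s - 1‖ * ‖s + 1‖ := by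
    rw [← norm_pow, ← norm_mul]
    congr 1
    linear_combination -hs
  have hlogw : 2 * Real.log ‖w‖ = Real.log ‖s - 1‖ + Real.log ‖s + 1‖ := by
    have := Real.log_pow ‖w‖ 2
    rw [hw2, Real.log_mul (norm_ne_zero_iff.mpr hs1) (norm_ne_zero_iff.mpr hs')] at this
    push_cast at this
    linarith
  rw [norm_div, norm_sub_rev, Real.log_div (norm_ne_zero_iff.mpr hs1) (norm_ne_zero_iff.mpr hw)]
  linarith

noncomputable def omegaGreen (w : ℂ) : ℝ := -Real.log ‖(1 - Complex.sqrt (1 + w ^ 2)) / w‖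

lemma omegaGreen_eq {w : ℂ} (hw : w ≠ 0) :
    omegaGreen w = (Real.log ‖Complex.sqrt (1 + w ^ 2) + 1‖
      - Real.log ‖Complex.sqrt (1 + w ^ 2) - 1‖) / 2 :=
  neg_log_norm_one_sub_div (Complex.sqrt_sq _) hw (Complex.sqrt_add_one_ne_zero _)

lemma omegaGreen_pos {w : ℂ} (hw : 1 + w ^ 2 ∈ slitPlane) (hw0 : w ≠ 0) :
    0 < omegaGreen w := by
  have hs1 := sub_one_ne_zero_of_sq_eq_one_add_sq (Complex.sqrt_sq _) hw0
  have := Real.log_lt_log (norm_pos_iff.mpr hs1)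
    (Complex.norm_sub_one_lt_norm_add_one (Complex.re_sqrt_pos hw))
  rw [omegaGreen_eq hw0]
  linarith

lemma exists_nhds_omegaGreen_eq_re {w : ℂ} (hw : 1 + w ^ 2 ∈ slitPlane) (hw0 : w ≠ 0) :
    ∃ U ∈ 𝓝 w, ∃ f : ℂ → ℂ, DifferentiableOn ℂ f U ∧
      ∀ z ∈ U, omegaGreen z = (f z).re := by
  have hdiff : ∀ᶠ z in 𝓝 w,
      DifferentiableAt ℂ (fun z => (1 - Complex.sqrt (1 + z ^ 2)) / z) z := by
    have hslit : ∀ᶠ z in 𝓝 w, 1 + z ^ 2 ∈ slitPlane :=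
      (by fun_prop : Continuous fun z : ℂ => 1 + z ^ 2).continuousAt.eventually_mem
        (isOpen_slitPlane.mem_nhds hw)
    filter_upwards [hslit, eventually_ne_nhds hw0] with z hz hz0
    exact ((differentiableAt_const 1).sub
      ((by fun_prop : DifferentiableAt ℂ (fun z : ℂ => 1 + z ^ 2) z).cpow
        (differentiableAt_const _) hz)).div differentiableAt_id hz0
  have hs1 := sub_one_ne_zero_of_sq_eq_one_add_sq (Complex.sqrt_sq (1 + w ^ 2)) hw0
  have hne : (1 - Complex.sqrt (1 + w ^ 2)) / w ≠ 0 :=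
    div_ne_zero (by rwa [← neg_sub, neg_ne_zero]) hw0
  obtain ⟨U, hU, F, hF, hFU⟩ := Complex.exists_nhds_log_norm_eq_re hdiff hne
  exact ⟨U, hU, fun z => -F z, hF.neg, fun z hz => by rw [omegaGreen, hFU z hz, neg_re]⟩

lemma tendsto_omegaGreen {ζ : ℝ} (hζ : 1 < |ζ|) :
    Tendsto omegaGreen (𝓝 (ζ * I)) (𝓝 0) := by
  set z₀ : ℂ := 1 + (ζ * I) ^ 2
  have hz₀ : z₀ = ((1 - ζ ^ 2 : ℝ) : ℂ) := by
    simp only [z₀, mul_pow, I_sq]; push_cast; ring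
  have hre : (Complex.sqrt z₀).re = 0 := by
    rw [hz₀, Complex.re_sqrt_ofReal, Real.sqrt_eq_zero']
    nlinarith [one_lt_sq_iff_one_lt_abs ζ |>.mpr hζ]
  have hnorm := Complex.norm_sub_one_eq_norm_add_one hre
  have hpos : ‖Complex.sqrt z₀ + 1‖ ≠ 0 :=
    norm_ne_zero_iff.mpr (Complex.sqrt_add_one_ne_zero z₀)
  have hH : Tendsto
      (fun z => (Real.log ‖Complex.sqrt z + 1‖ - Real.log ‖Complex.sqrt z - 1‖) / 2)
      (𝓝 z₀) (𝓝 0) := by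
    have hcont := ((Complex.continuous_norm_sqrt_add_one.continuousAt.log hpos).sub
      (Complex.continuous_norm_sqrt_sub_one.continuousAt.log (hnorm ▸ hpos))).div_const 2
    simpa [hnorm] using hcont.tendsto
  have hz : Tendsto (fun w : ℂ => 1 + w ^ 2) (𝓝 (ζ * I)) (𝓝 z₀) :=
    (by fun_prop : Continuous fun w : ℂ => 1 + w ^ 2).continuousAt
  have hζI : (ζ : ℂ) * I ≠ 0 :=
    mul_ne_zero (ofReal_ne_zero.mpr (abs_pos.mp (by linarith))) I_ne_zero
  refine (hH.comp hz).congr' ?_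
  filter_upwards [eventually_ne_nhds hζI] with w hw
  exact (omegaGreen_eq hw).symm

/-- g(w) = -log|(1-√(1+w²))/w| is harmonic (locally the real part of a
holomorphic function) and positive on Ω \ {0}, Ω = ℂ \ {it : |t| ≥ 1}, and g(w) → 0
as w → iζ for any boundary point iζ with |ζ| > 1. -/
theorem greens_function_of_Omega :
    let Ω : Set ℂ := {w | ∀ t : ℝ, 1 ≤ |t| → w ≠ t * I}
    let g : ℂ → ℝ := fun w => -Real.log ‖(1 - (1 + w ^ 2) ^ ((1 : ℂ) / 2)) / w‖
    (∀ w ∈ Ω \ {0}, ∃ U ∈ nhds w, ∃ f : ℂ → ℂ,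
        DifferentiableOn ℂ f U ∧ ∀ z ∈ U, g z = (f z).re) ∧
    (∀ w ∈ Ω \ {0}, 0 < g w) ∧
    (∀ ζ : ℝ, 1 < |ζ| →
        Tendsto g (nhdsWithin ((ζ : ℂ) * I) (Ω \ {0})) (nhds 0)) := by
  intro Ω g
  have hg : g = omegaGreen := by
    funext w
    simp only [g, omegaGreen, Complex.sqrt, one_div]
  rw [hg]
  exact ⟨fun w hw => exists_nhds_omegaGreen_eq_re (one_add_sq_mem_slitPlane hw.1) hw.2,
    fun w hw => omegaGreen_pos (one_add_sq_mem_slitPlane hw.1) hw.2,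
    fun ζ hζ => (tendsto_omegaGreen hζ).mono_left nhdsWithin_le_nhds⟩
end

section
/- The formal power series solution h(x) = ∑_{k≥1} a_k x^{-k} of h'' + h'/x + h - 4/(25x²) + h²/2 - 4h/(25x²) = 0 (as a formal series in 1/x) has a₁ = 0, a₂ = 4/25, a₃ = 0, and a₄ = -392/625. -/
/-!
In the variable `u = 1/x` the operator `h ↦ h'' + h'/x` sends `u ^ n` to `n² u ^ (n + 2)`, so the
coefficient of `u ^ (n + 2)` in the equation reads
`a_{n+2} = (4/25 - n²) a_n + (4/25) [n = 0] - ½ [u ^ (n + 2)] h²`,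
while the coefficient of `u` gives `a₁ = -½ [u] h² = 0`. Since `h²` starts at `u²`, these determine
`a₁, …, a₄` one after the other.
-/

open PowerSeries

namespace PowerSeries

variable {R : Type*} [CommRing R]

/-- The formal `x`-derivative written in the variable `u = 1/x`: `d/dx = -u² d/du`. -/
noncomputable def xDeriv (F : R⟦X⟧) : R⟦X⟧ :=
  -(X ^ 2) * derivative R F

@[simp]
theorem constantCoeff_xDeriv (F : R⟦X⟧) : constantCoeff (xDeriv F) = 0 := by
  simp [xDeriv]

theorem coeff_succ_xDeriv (F : R⟦X⟧) (n : ℕ) :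
    coeff (n + 1) (xDeriv F) = -(n : R) * coeff n F := by
  rcases n with _ | n
  · simp [xDeriv, coeff_X_pow_mul']
  · rw [xDeriv, neg_mul, map_neg, show n + 1 + 1 = n + 2 by rfl, coeff_X_pow_mul,
      coeff_derivative]
    push_cast
    ring

/-- `h ↦ h'' + h'/x`, the factor `X` being `1/x`. -/
noncomputable def besselOp (F : R⟦X⟧) : R⟦X⟧ :=
  xDeriv (xDeriv F) + X * xDeriv F

@[simp]
theorem coeff_one_besselOp (F : R⟦X⟧) : coeff 1 (besselOp F) = 0 := by
  simp [besselOp, coeff_succ_xDeriv (xDeriv F) 0]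

theorem coeff_add_two_besselOp (F : R⟦X⟧) (n : ℕ) :
    coeff (n + 2) (besselOp F) = (n : R) ^ 2 * coeff n F := by
  rw [besselOp, map_add, coeff_succ_xDeriv, coeff_succ_X_mul, coeff_succ_xDeriv]
  push_cast
  ring

theorem coeff_sq_of_constantCoeff_eq_zero {F : R⟦X⟧} (hF : constantCoeff F = 0) :
    coeff 1 (F ^ 2) = 0 ∧ coeff 2 (F ^ 2) = coeff 1 F ^ 2 ∧
      coeff 3 (F ^ 2) = 2 * coeff 1 F * coeff 2 F ∧
      coeff 4 (F ^ 2) = 2 * coeff 1 F * coeff 3 F + coeff 2 F ^ 2 := by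
  rw [← coeff_zero_eq_constantCoeff_apply] at hF
  simp only [pow_two, coeff_mul, Finset.Nat.sum_antidiagonal_eq_sum_range_succ_mk,
    Finset.sum_range_succ, Finset.sum_range_zero, hF]
  refine ⟨?_, ?_, ?_, ?_⟩ <;> ring

end PowerSeries

noncomputable def painleveLHS (H : ℂ⟦X⟧) : ℂ⟦X⟧ :=
  besselOp H + H - C (4 / 25) * X ^ 2 + C (1 / 2) * H ^ 2 - C (4 / 25) * X ^ 2 * H

theorem coeff_one_painleveLHS (H : ℂ⟦X⟧) :
    coeff 1 (painleveLHS H) = coeff 1 H + 1 / 2 * coeff 1 (H ^ 2) := by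
  simp [painleveLHS, coeff_X_pow_mul', coeff_X_pow, coeff_C_mul, mul_assoc]

theorem coeff_add_two_painleveLHS (H : ℂ⟦X⟧) (n : ℕ) :
    coeff (n + 2) (painleveLHS H) = (n : ℂ) ^ 2 * coeff n H + coeff (n + 2) H
      - (if n = 0 then 4 / 25 else 0) + 1 / 2 * coeff (n + 2) (H ^ 2) - 4 / 25 * coeff n H := by
  simp [painleveLHS, coeff_add_two_besselOp, coeff_X_pow, coeff_C_mul, mul_assoc,
    coeff_X_pow_mul]

/-- writing h(x) = ∑_{k≥1} aₖ x^{-k} as a formal power series H in the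
variable u = 1/x (no constant term), with the formal x-derivative D = -X²·d/dX
(so that (x^{-k})' = -k x^{-k-1}), a solution of
h'' + h'/x + h - 4/(25x²) + h²/2 - 4h/(25x²) = 0 has
a₁ = 0, a₂ = 4/25, a₃ = 0, a₄ = -392/625. -/
theorem painleve_I_asymptotic_coefficients (H : PowerSeries ℂ)
    (h0 : constantCoeff H = 0)
    (hode :
      (fun F : PowerSeries ℂ => -(PowerSeries.X ^ 2) * derivativeFun F)
          ((fun F : PowerSeries ℂ => -(PowerSeries.X ^ 2) * derivativeFun F) H)
        + PowerSeries.X * ((fun F : PowerSeries ℂ => -(PowerSeries.X ^ 2) * derivativeFun F) H)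
        + H - PowerSeries.C (R := ℂ) (4 / 25) * PowerSeries.X ^ 2
        + PowerSeries.C (R := ℂ) (1 / 2) * H ^ 2
        - PowerSeries.C (R := ℂ) (4 / 25) * PowerSeries.X ^ 2 * H = 0) :
    coeff 1 H = 0 ∧ coeff 2 H = 4 / 25 ∧ coeff 3 H = 0 ∧
      coeff 4 H = -392 / 625 := by
  have hLHS : painleveLHS H = 0 := hode
  have e1 := coeff_one_painleveLHS H
  have e2 := coeff_add_two_painleveLHS H 0
  have e3 := coeff_add_two_painleveLHS H 1
  have e4 := coeff_add_two_painleveLHS H 2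
  obtain ⟨s1, s2, s3, s4⟩ := coeff_sq_of_constantCoeff_eq_zero h0
  simp only [hLHS, map_zero, coeff_zero_eq_constantCoeff_apply, h0] at e1 e2 e3 e4
  norm_num [s1, s2, s3, s4] at e1 e2 e3 e4
  have a1 : coeff 1 H = 0 := e1.symm
  rw [a1] at e2 e3 e4
  have a2 : coeff 2 H = 4 / 25 := by linear_combination -e2
  have a3 : coeff 3 H = 0 := by linear_combination -e3
  rw [a2] at e4
  exact ⟨a1, a2, a3, by linear_combination -e4⟩
end

section
/- For fixed n ≥ 1, fixed z with |z| < 1, and Re(x) → +∞, the tail ρ_{n,0}(z,x) = (1-z) ∑_{k=n}^∞ z^k k!/(x)_{k+1} satisfies |ρ_{n,0}(z,x)| = O(|x|^{-n}); in particular |ρ_{n,0}(z,x)| ≤ C(n,z)/|x|^n for all x with Re(x) ≥ 1. -/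
open Complex Finset Nat

/-!
On the half-plane `1 ≤ re x` the factors of the rising factorial satisfy `‖x‖ ≤ ‖x + j‖` and
`j + 1 ≤ ‖x + j‖`. Using the first bound for `j < n` and the second for `j ≥ n` gives
`‖x‖ ^ n * (n + k)! ≤ n! * ∏_{j < n + k} ‖x + j‖`, so the `k`-th term of the tail is at most
`n! ‖z‖ ^ (n + k) / ‖x‖ ^ n`, and summing the geometric series yields the constant
`C = ‖1 - z‖ n! ‖z‖ ^ n / (1 - ‖z‖)`.
-/

lemma norm_le_norm_add_ofReal {x : ℂ} (hx : 0 ≤ x.re) {r : ℝ} (hr : 0 ≤ r) :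
    ‖x‖ ≤ ‖x + r‖ := by
  rw [← sq_le_sq₀ (norm_nonneg _) (norm_nonneg _), Complex.sq_norm, Complex.sq_norm, normSq_apply,
    normSq_apply]
  simp only [add_re, add_im, ofReal_re, ofReal_im, add_zero]
  nlinarith

lemma natCast_add_one_le_norm_add_natCast {x : ℂ} (hx : 1 ≤ x.re) (j : ℕ) :
    (j : ℝ) + 1 ≤ ‖x + j‖ :=
  calc (j : ℝ) + 1 ≤ (x + j).re := by simp only [add_re, natCast_re]; linarith
    _ ≤ ‖x + j‖ := re_le_norm _

lemma norm_pow_mul_factorial_le_prod_norm_add {x : ℂ} (hx : 1 ≤ x.re) (n k : ℕ) :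
    ‖x‖ ^ n * (n + k)! ≤ n ! * ∏ j ∈ range (n + k), ‖x + j‖ := by
  induction k with
  | zero =>
    have hpow : ‖x‖ ^ n ≤ ∏ j ∈ range n, ‖x + j‖ := by
      calc ‖x‖ ^ n = ∏ _j ∈ range n, ‖x‖ := by rw [prod_const, card_range]
        _ ≤ ∏ j ∈ range n, ‖x + j‖ := prod_le_prod (fun _ _ => norm_nonneg x) fun j _ => by
          simpa using norm_le_norm_add_ofReal (by linarith) (Nat.cast_nonneg (α := ℝ) j)
    rw [add_zero, mul_comm]
    exact mul_le_mul_of_nonneg_left hpow (by positivity)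
  | succ k ih =>
    have hlast := natCast_add_one_le_norm_add_natCast hx (n + k)
    rw [← add_assoc, factorial_succ, prod_range_succ, Nat.cast_mul]
    push_cast at hlast ⊢
    calc ‖x‖ ^ n * (((n : ℝ) + k + 1) * (n + k)!)
        = ((n : ℝ) + k + 1) * (‖x‖ ^ n * (n + k)!) := by ring
      _ ≤ ‖x + (n + k)‖ * (n ! * ∏ j ∈ range (n + k), ‖x + j‖) :=
        mul_le_mul hlast ih (by positivity) (norm_nonneg _)
      _ = n ! * ((∏ j ∈ range (n + k), ‖x + j‖) * ‖x + (n + k)‖) := by ring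

lemma norm_tail_term_le {x : ℂ} (hx : 1 ≤ x.re) (z : ℂ) (n k : ℕ) :
    ‖z ^ (n + k) * ((n + k)! : ℂ) / ∏ j ∈ range (n + k + 1), (x + j)‖ ≤
      n ! / ‖x‖ ^ n * ‖z‖ ^ (n + k) := by
  have hx0 : 0 < ‖x‖ := one_pos.trans_le (hx.trans (re_le_norm x))
  have hfactor : ∀ j : ℕ, 1 ≤ ‖x + j‖ := fun j =>
    le_add_of_nonneg_left (Nat.cast_nonneg (α := ℝ) j) |>.trans
      (natCast_add_one_le_norm_add_natCast hx j)
  have hprod : 0 < ∏ j ∈ range (n + k), ‖x + j‖ :=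
    prod_pos fun j _ => one_pos.trans_le (hfactor j)
  have hden : ∏ j ∈ range (n + k), ‖x + j‖ ≤ ∏ j ∈ range (n + k + 1), ‖x + j‖ := by
    rw [prod_range_succ]
    exact le_mul_of_one_le_right hprod.le (hfactor _)
  rw [norm_div, norm_mul, norm_pow, norm_natCast, norm_prod]
  calc ‖z‖ ^ (n + k) * (n + k)! / ∏ j ∈ range (n + k + 1), ‖x + j‖
      ≤ ‖z‖ ^ (n + k) * (n + k)! / ∏ j ∈ range (n + k), ‖x + j‖ :=
        div_le_div_of_nonneg_left (by positivity) hprod hden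
    _ ≤ n ! / ‖x‖ ^ n * ‖z‖ ^ (n + k) := by
        rw [div_le_iff₀ hprod, div_mul_eq_mul_div, div_mul_eq_mul_div, le_div_iff₀ (by positivity)]
        have := norm_pow_mul_factorial_le_prod_norm_add hx n k
        calc ‖z‖ ^ (n + k) * (n + k)! * ‖x‖ ^ n
            = ‖z‖ ^ (n + k) * (‖x‖ ^ n * (n + k)!) := by ring
          _ ≤ ‖z‖ ^ (n + k) * (n ! * ∏ j ∈ range (n + k), ‖x + j‖) :=
            mul_le_mul_of_nonneg_left this (by positivity)
          _ = _ := by ring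

theorem rho_tail_large_x_general (n : ℕ) (z : ℂ) (hz : ‖z‖ < 1) :
    ∃ C : ℝ, ∀ x : ℂ, 1 ≤ x.re →
      ‖(1 - z) * ∑' k : ℕ,
          z ^ (n + k) * (Nat.factorial (n + k) : ℂ) /
            ∏ j ∈ Finset.range (n + k + 1), (x + j)‖
        ≤ C / ‖x‖ ^ n := by
  refine ⟨‖1 - z‖ * (n ! * ‖z‖ ^ n / (1 - ‖z‖)), fun x hx => ?_⟩
  have hgeom : HasSum (fun k : ℕ => n ! / ‖x‖ ^ n * ‖z‖ ^ (n + k))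
      (n ! / ‖x‖ ^ n * (‖z‖ ^ n * (1 - ‖z‖)⁻¹)) := by
    simp only [pow_add]
    exact ((hasSum_geometric_of_lt_one (norm_nonneg z) hz).mul_left _).mul_left _
  have htail := tsum_of_norm_bounded hgeom (norm_tail_term_le hx z n)
  rw [norm_mul]
  calc ‖1 - z‖ * ‖∑' k : ℕ, z ^ (n + k) * ((n + k)! : ℂ) / ∏ j ∈ range (n + k + 1), (x + j)‖
      ≤ ‖1 - z‖ * (n ! / ‖x‖ ^ n * (‖z‖ ^ n * (1 - ‖z‖)⁻¹)) :=
        mul_le_mul_of_nonneg_left htail (norm_nonneg _)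
    _ = ‖1 - z‖ * (n ! * ‖z‖ ^ n / (1 - ‖z‖)) / ‖x‖ ^ n := by ring

/-- for fixed n ≥ 1 and fixed |z| < 1, the tail
ρ_{n,0}(z,x) = (1-z)∑_{k=n}^∞ z^k k!/(x)_{k+1} satisfies
|ρ_{n,0}(z,x)| ≤ C(n,z)/|x|^n uniformly over Re x ≥ 1. -/
theorem rho_tail_large_x (n : ℕ) (hn : 1 ≤ n) (z : ℂ) (hz : ‖z‖ < 1) :
    ∃ C : ℝ, ∀ x : ℂ, 1 ≤ x.re →
      ‖(1 - z) * ∑' k : ℕ,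
          z ^ (n + k) * (Nat.factorial (n + k) : ℂ) /
            ∏ j ∈ Finset.range (n + k + 1), (x + j)‖
        ≤ C / ‖x‖ ^ n :=
  rho_tail_large_x_general n z hz
end
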